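/- arXiv:0903.3627 — 3 statements merged into one kernel-verified Lean document; each statement's English description precedes it below -/
import Mathlib

section
/- Let H be a p-dimensional Hilbert space, D a disjoint union of N orthonormal bases of H, and S an injective map from a set V into D. Let γ be a closed strict path on V, v a vertex crossed exactly once by γ with distinct neighbors v_l, v_r, and γ_v̂ the path obtained by deleting v. Then summing the path weight over all choices of the image of v ranging over all of D gives Σ_{b ∈ D} w_γ(S ⊔ b) = N · w_{γ_v̂}(S), where S ⊔ b extends S by sending v to b. -/
open scoped InnerProductSpace

/-- The weight of a path `γ` of length `k` on a vertex set `V` under an assignment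
`T : V → H` of vectors. -/
noncomputable def pathWeight {V H : Type*} [NormedAddCommGroup H] [InnerProductSpace ℂ H]
    {k : ℕ} (γ : Fin (k + 1) → V) (T : V → H) : ℂ :=
  ∏ j : Fin k, ⟪T (γ j.castSucc), T (γ j.succ)⟫_ℂ

/-- The path `γ_v̂` of length `k−1` obtained from `γ` (of length `k = m+1`) by deleting the
vertex at position `i₀`, connecting its neighbors directly. -/
def deleteVertex {V : Type*} {m : ℕ} (γ : Fin (m + 2) → V) (i₀ : ℕ) :
    Fin (m + 1) → V :=
  fun j => if (j : ℕ) < i₀ then γ j.castSucc else γ j.succ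

/-- Extend an assignment `S` by sending the vertex `v` to the vector `b`. -/
def extendAt {V H : Type*} [DecidableEq V] (v : V) (S : V → H) (b : H) : V → H :=
  fun u => if u = v then b else S u

/-!
Away from position `i₀` the assignment `S ⊔ b` agrees with `S` along `γ`, so the vector
sequence of `γ` under `S ⊔ b` is that of `γ_v̂` under `S` with `b` inserted between `S v_l`
and `S v_r`. Hence `w_γ(S ⊔ b)` is `w_{γ_v̂}(S)` with the factor `⟪S v_l, S v_r⟫`
replaced by `⟪S v_l, b⟫ ⟪b, S v_r⟫`, and summing over one orthonormal basis restores that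
factor (Parseval). Each of the `N` bases contributes `w_{γ_v̂}(S)`.
-/

lemma Fin.castSucc_succAbove_castSucc_of_ne {n : ℕ} {c k : Fin (n + 1)} (hk : k ≠ c) :
    (c.castSucc.succAbove k).castSucc = c.castSucc.succ.succAbove k.castSucc := by
  rcases lt_or_gt_of_ne hk with hlt | hgt
  · rw [succAbove_of_castSucc_lt _ _ (by simpa using hlt),
      succAbove_of_castSucc_lt _ _ (by rw [lt_def] at hlt ⊢; simp; omega)]
  · rw [succAbove_of_le_castSucc _ _ (by simpa using hgt.le),
      succAbove_of_le_castSucc _ _ (by rw [lt_def] at hgt; rw [le_def]; simp; omega)]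
    simp

section Insertion

variable {H : Type*} [NormedAddCommGroup H] [InnerProductSpace ℂ H]

lemma pathWeight_eq_pathWeight_comp {V : Type*} {k : ℕ} (γ : Fin (k + 1) → V) (T : V → H) :
    pathWeight γ T = pathWeight (T ∘ γ) id :=
  rfl

lemma pathWeight_eq_mul_prod_succAbove {n : ℕ} (u : Fin (n + 2) → H) (c : Fin (n + 1)) :
    pathWeight u id =
      ⟪u c.castSucc, u c.succ⟫_ℂ *
        ∏ l : Fin n, ⟪u (c.succAbove l).castSucc, u (c.succAbove l).succ⟫_ℂ :=
  Fin.prod_univ_succAbove _ c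

lemma pathWeight_insertNth_castSucc_succ {n : ℕ} (u : Fin (n + 2) → H) (c : Fin (n + 1))
    (b : H) :
    pathWeight (Fin.insertNth c.castSucc.succ b u) id =
      ⟪u c.castSucc, b⟫_ℂ * ⟪b, u c.succ⟫_ℂ *
        ∏ l : Fin n, ⟪u (c.succAbove l).castSucc, u (c.succAbove l).succ⟫_ℂ := by
  rw [pathWeight, Fin.prod_univ_succAbove _ c.castSucc, Fin.prod_univ_succAbove _ c,
    ← mul_assoc]
  congr 1
  · have hl : c.castSucc.castSucc = c.castSucc.succ.succAbove c.castSucc :=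
      (Fin.succAbove_succ_self _).symm
    have hr : c.succ.succ = c.castSucc.succ.succAbove c.succ := by
      rw [Fin.succ_succAbove_succ, Fin.succAbove_castSucc_self]
    simp only [id, Fin.succAbove_castSucc_self, ← Fin.succ_castSucc]
    rw [hl, hr, Fin.insertNth_apply_same, Fin.insertNth_apply_succAbove,
      Fin.insertNth_apply_succAbove]
  · refine Fintype.prod_congr _ _ fun l => ?_
    rw [Fin.castSucc_succAbove_castSucc_of_ne (Fin.succAbove_ne c l),
      ← Fin.succ_succAbove_succ]
    simp only [id, Fin.insertNth_apply_succAbove]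

theorem OrthonormalBasis.sum_pathWeight_insertNth {ι : Type*} [Fintype ι] {m : ℕ}
    (B : OrthonormalBasis ι ℂ H) (u : Fin (m + 1) → H) {p : Fin (m + 2)} (hp0 : p ≠ 0)
    (hpl : p ≠ Fin.last _) :
    ∑ k, pathWeight (Fin.insertNth p (B k) u) id = pathWeight u id := by
  cases m with
  | zero => fin_cases p <;> simp_all
  | succ n =>
    obtain ⟨q, rfl⟩ := Fin.exists_succ_eq.mpr hp0
    obtain ⟨c, rfl⟩ : ∃ c : Fin (n + 1), c.castSucc = q :=
      Fin.exists_castSucc_eq.mpr (by rintro rfl; exact hpl (Fin.succ_last _))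
    simp_rw [pathWeight_insertNth_castSucc_succ, ← Finset.sum_mul, B.sum_inner_mul_inner,
      pathWeight_eq_mul_prod_succAbove u c]

end Insertion

lemma deleteVertex_eq_comp_succAbove {V : Type*} {m : ℕ} (γ : Fin (m + 2) → V) {i₀ : ℕ}
    (hi : i₀ < m + 2) : deleteVertex γ i₀ = γ ∘ Fin.succAbove ⟨i₀, hi⟩ := by
  ext j
  simp only [deleteVertex, Function.comp, Fin.succAbove, Fin.lt_def, Fin.val_castSucc]
  split_ifs <;> rfl

lemma extendAt_comp_eq_insertNth {V H : Type*} [DecidableEq V] {n : ℕ} (γ : Fin (n + 1) → V)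
    {p : Fin (n + 1)} {v : V} (hv : γ p = v) (hne : ∀ j, γ (p.succAbove j) ≠ v)
    (S : V → H) (b : H) :
    extendAt v S b ∘ γ = Fin.insertNth p b (S ∘ γ ∘ p.succAbove) := by
  ext i
  obtain rfl | ⟨j, rfl⟩ := p.eq_self_or_eq_succAbove i
  · simp [extendAt, hv]
  · simp [extendAt, hne j]

/-- Let `H` be a `p`-dimensional Hilbert space, `D = ⊔_{x∈X} B_x` a disjoint union of `N`
orthonormal bases of `H`, `γ` a closed strict path on `V`, `v` a vertex crossed exactly once
by `γ` with distinct neighbors, and `S` an injective map of `V∖{v}` into `D`. Then summing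
the path weight over all choices `b ∈ D` for the image of `v` gives
`Σ_{b∈D} w_γ(S ⊔ b) = N · w_{γ_v̂}(S)`. -/
theorem stmt_11 (p m : ℕ) (X V : Type*) [Fintype X] [DecidableEq V]
    (B : X → OrthonormalBasis (Fin p) ℂ (EuclideanSpace ℂ (Fin p)))
    (γ : Fin (m + 2) → V)
    (i₀ : ℕ) (h0 : 0 < i₀) (hk : i₀ < m + 1)
    (v : V) (hv : γ ⟨i₀, by omega⟩ = v)
    (honce : ∀ j : Fin (m + 2), γ j = v → (j : ℕ) = i₀)
    (S : V → EuclideanSpace ℂ (Fin p)) :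
    ∑ x : X, ∑ i : Fin p, pathWeight γ (extendAt v S (B x i)) =
      (Fintype.card X : ℂ) * pathWeight (deleteVertex γ i₀) S := by
  set q : Fin (m + 2) := ⟨i₀, by omega⟩
  have hne : ∀ j, γ (q.succAbove j) ≠ v := fun j hj =>
    q.succAbove_ne j (Fin.ext (honce _ hj))
  have hq0 : q ≠ 0 := by simp [q, Fin.ext_iff]; omega
  have hql : q ≠ Fin.last _ := by simp [q, Fin.ext_iff]; omega
  have hbasis : ∀ x, ∑ i, pathWeight γ (extendAt v S (B x i)) =
      pathWeight (deleteVertex γ i₀) S := by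
    intro x
    simp only [pathWeight_eq_pathWeight_comp γ, extendAt_comp_eq_insertNth γ hv hne,
      (B x).sum_pathWeight_insertNth _ hq0 hql,
      deleteVertex_eq_comp_succAbove γ (by omega : i₀ < m + 2)]
    rfl
  simp [hbasis]
end

section
/- Let p be an odd prime and H = ℂ(𝔽_p) with the standard inner product. For two distinct lines L ≠ M in the symplectic plane V = 𝔽_p × 𝔽_p, let B_L and B_M be orthonormal eigenbases of H diagonalizing the restriction of the Heisenberg representation π to L and M respectively. Then for every φ ∈ B_L and ψ ∈ B_M, |⟨φ, ψ⟩| = 1/√p. -/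
open Complex

/-- The (projective) Heisenberg action of `(τ, w) ∈ V = 𝔽_p × 𝔽_p` on `ℂ(𝔽_p)`:
`(π(τ,w) f)(t) = e^{2πi w t / p} f(t + τ)`. -/
noncomputable def heisU (p : ℕ) (v : ZMod p × ZMod p) (f : ZMod p → ℂ) : ZMod p → ℂ :=
  fun t => Complex.exp (2 * Real.pi * Complex.I * ((v.2 * t).val : ℕ) / p) * f (t + v.1)

/-!
A line of `𝔽_p × 𝔽_p` is either `𝔽_p ∙ (0, 1)` or `𝔽_p ∙ (1, c)`. On the vertical line,
`π(0, 1)` multiplies by the injective character `t ↦ e(t)`, so a unit eigenvector is a delta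
function. On the line of slope `c`, an eigenvector satisfies `φ(τ) = μ(τ) φ(0)` with `|μ(τ)| = 1`
since `π` is unitary, so `|φ| ≡ 1/√p`; this settles the mixed case. Moreover
`φ(0) φ(u + s) = e(-cus) φ(u) φ(s)`, and for slopes `c ≠ d` the product `g = φ ψ̄` satisfies the
same relation with the nonzero coefficient `d - c`. Expanding `|∑ g|²` along `t = u + s`, the
inner sums become character sums `∑ₛ e((d - c) u s)`, which vanish unless `u = 0`, leaving
`|∑ g|² = p |g|² = 1/p`.
-/

open ComplexConjugate

local notation "𝕖" => ZMod.stdAddChar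

theorem Submodule.eq_span_vertical_or_slope {K : Type*} [Field K] {L : Submodule K (K × K)}
    (hL : Module.finrank K L = 1) : L = K ∙ (0, 1) ∨ ∃ c : K, L = K ∙ (1, c) := by
  obtain ⟨w, hwL, hw0⟩ := Submodule.exists_mem_ne_zero_of_ne_bot (p := L) (by
    rintro rfl
    simp at hL)
  by_cases hw : w.1 = 0
  · have hw2 : w.2 ≠ 0 := fun h => hw0 (Prod.ext hw h)
    refine .inl (eq_span_singleton_of_mem_of_finrank_eq_one hL ?_ (by simp))
    convert L.smul_mem w.2⁻¹ hwL using 1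
    ext <;> simp [hw, hw2]
  · refine .inr ⟨w.2 / w.1, eq_span_singleton_of_mem_of_finrank_eq_one hL ?_ (by simp)⟩
    convert L.smul_mem w.1⁻¹ hwL using 1
    ext <;> simp [hw, div_eq_inv_mul]

theorem eq_one_div_sqrt_of_mul_sq_eq_one {n : ℕ} {x : ℝ} (hx : 0 ≤ x) (h : n * x ^ 2 = 1) :
    x = 1 / Real.sqrt n := by
  have hn : (0 : ℝ) < n := Nat.cast_pos.mpr (Nat.pos_of_ne_zero (by rintro rfl; simp at h))
  rw [eq_div_iff (by positivity), ← sq_eq_sq₀ (by positivity) zero_le_one, mul_pow,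
    Real.sq_sqrt hn.le]
  linarith

section

variable {p : ℕ}

theorem heisU_apply [NeZero p] (v : ZMod p × ZMod p) (f : ZMod p → ℂ) (t : ZMod p) :
    heisU p v f t = 𝕖 (v.2 * t) * f (t + v.1) := by
  simp [heisU, ZMod.stdAddChar_apply, ZMod.toCircle_apply]

theorem sum_norm_sq_heisU [NeZero p] (v : ZMod p × ZMod p) (f : ZMod p → ℂ) :
    ∑ t, ‖heisU p v f t‖ ^ 2 = ∑ t, ‖f t‖ ^ 2 := by
  simp only [heisU_apply, norm_mul, AddChar.norm_apply, one_mul]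
  exact Equiv.sum_comp (Equiv.addRight v.1) fun t => ‖f t‖ ^ 2

theorem norm_eq_one_of_heisU_eq_smul [NeZero p] {v : ZMod p × ZMod p} {f : ZMod p → ℂ} {μ : ℂ}
    (hf : ∑ t, ‖f t‖ ^ 2 = 1) (hμ : heisU p v f = μ • f) : ‖μ‖ = 1 := by
  have h := sum_norm_sq_heisU v f
  simp only [hμ, Pi.smul_apply, smul_eq_mul, norm_mul, mul_pow, ← Finset.mul_sum, hf,
    mul_one] at h
  exact (pow_eq_one_iff_of_nonneg (norm_nonneg μ) two_ne_zero).mp h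

/-- For odd `p` the nonzero solutions are `g t = g 0 * 𝕖 (a * t ^ 2 / 2 + b * t)`. -/
def HasQuadraticPhase [NeZero p] (a : ZMod p) (g : ZMod p → ℂ) : Prop :=
  ∀ u s, g 0 * g (u + s) = 𝕖 (a * u * s) * g u * g s

namespace HasQuadraticPhase

variable {a b : ZMod p} {g h : ZMod p → ℂ}

theorem mul_conj [NeZero p] (hg : HasQuadraticPhase a g) (hh : HasQuadraticPhase b h) :
    HasQuadraticPhase (a - b) fun t => g t * conj (h t) := fun u s => by
  have hh' := congrArg conj (hh u s)
  simp only [map_mul, ← AddChar.map_neg_eq_conj] at hh'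
  have he : 𝕖 ((a - b) * u * s) = 𝕖 (a * u * s) * 𝕖 (-(b * u * s)) := by
    rw [← AddChar.map_add_eq_mul]
    ring_nf
  rw [he]
  linear_combination (conj (h 0) * conj (h (u + s))) * hg u s +
    (𝕖 (a * u * s) * g u * g s) * hh'

theorem norm_sum_sq [Fact p.Prime] (ha : a ≠ 0) (hg : HasQuadraticPhase a g) (h0 : g 0 ≠ 0)
    {r : ℝ} (hr : ∀ t, ‖g t‖ = r) : ‖∑ t, g t‖ ^ 2 = p * r ^ 2 := by
  have hchar (u : ZMod p) : ∑ s, 𝕖 (a * u * s) = if u = 0 then (p : ℂ) else 0 := by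
    rw [← Finset.sum_congr rfl fun s _ => congrArg 𝕖 (mul_comm s (a * u)),
      AddChar.sum_mulShift _ (ZMod.isPrimitive_stdAddChar p)]
    simp [ha]
  have hsq (s : ZMod p) : g s * conj (g s) = (r : ℂ) ^ 2 := by
    rw [Complex.mul_conj', hr]
  suffices g 0 * (‖∑ t, g t‖ : ℂ) ^ 2 = g 0 * (p * (r : ℂ) ^ 2) by
    exact_mod_cast mul_left_cancel₀ h0 this
  calc g 0 * (‖∑ t, g t‖ : ℂ) ^ 2
      = ∑ s, ∑ u, g 0 * g (u + s) * conj (g s) := by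
        rw [← Complex.mul_conj', map_sum, Finset.sum_mul_sum, Finset.sum_comm, Finset.mul_sum]
        refine Finset.sum_congr rfl fun s _ => ?_
        rw [Finset.mul_sum, ← Equiv.sum_comp (Equiv.addRight s)]
        simp only [Equiv.coe_addRight, mul_assoc]
    _ = ∑ u, ∑ s, g 0 * g (u + s) * conj (g s) := Finset.sum_comm
    _ = ∑ u, g u * (r : ℂ) ^ 2 * ∑ s, 𝕖 (a * u * s) := by
        refine Finset.sum_congr rfl fun u _ => ?_
        rw [Finset.mul_sum]
        refine Finset.sum_congr rfl fun s _ => ?_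
        rw [hg u s, ← hsq s]
        ring
    _ = g 0 * (p * (r : ℂ) ^ 2) := by
        simp only [hchar, mul_ite, mul_zero, Finset.sum_ite_eq', Finset.mem_univ, if_true]
        ring

end HasQuadraticPhase

section Eigenvectors

variable [NeZero p] {φ : ZMod p → ℂ}

theorem exists_single_of_vertical (hφnorm : ∑ t, ‖φ t‖ ^ 2 = 1)
    (hφ : ∀ v ∈ ZMod p ∙ ((0, 1) : ZMod p × ZMod p), ∃ μ : ℂ, heisU p v φ = μ • φ) :
    ∃ t₀, ‖φ t₀‖ = 1 ∧ ∀ t ≠ t₀, φ t = 0 := by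
  obtain ⟨μ, hμ⟩ := hφ _ (Submodule.mem_span_singleton_self _)
  have heigen (t : ZMod p) : 𝕖 t * φ t = μ * φ t := by
    simpa [heisU_apply] using congrFun hμ t
  obtain ⟨t₀, ht₀⟩ : ∃ t₀, φ t₀ ≠ 0 := by
    by_contra! h
    simp [h] at hφnorm
  have hsupp (t : ZMod p) (ht : t ≠ t₀) : φ t = 0 := by
    by_contra h
    have : 𝕖 t = 𝕖 t₀ :=
      ((mul_left_inj' h).mp (heigen t)).trans ((mul_left_inj' ht₀).mp (heigen t₀)).symm
    exact ht (ZMod.injective_stdAddChar this)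
  refine ⟨t₀, ?_, hsupp⟩
  rw [Finset.sum_eq_single t₀ (fun t _ ht => by simp [hsupp t ht]) (by simp)] at hφnorm
  exact (pow_eq_one_iff_of_nonneg (norm_nonneg _) two_ne_zero).mp hφnorm

variable {c : ZMod p} (hφnorm : ∑ t, ‖φ t‖ ^ 2 = 1)
  (hφ : ∀ v ∈ ZMod p ∙ ((1, c) : ZMod p × ZMod p), ∃ μ : ℂ, heisU p v φ = μ • φ)
include hφnorm hφ

theorem exists_eigenvalue_of_slope (τ : ZMod p) :
    ∃ μ : ℂ, ‖μ‖ = 1 ∧ ∀ t, 𝕖 (τ * c * t) * φ (t + τ) = μ * φ t := by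
  obtain ⟨μ, hμ⟩ : ∃ μ : ℂ, heisU p (τ, τ * c) φ = μ • φ := by
    simpa using hφ _ (Submodule.smul_mem _ τ (Submodule.mem_span_singleton_self _))
  exact ⟨μ, norm_eq_one_of_heisU_eq_smul hφnorm hμ,
    fun t => by simpa [heisU_apply] using congrFun hμ t⟩

theorem norm_apply_of_slope (t : ZMod p) : ‖φ t‖ = 1 / Real.sqrt p := by
  have hconst (τ : ZMod p) : ‖φ τ‖ = ‖φ 0‖ := by
    obtain ⟨μ, hμ1, hμ⟩ := exists_eigenvalue_of_slope hφnorm hφ τ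
    simpa [hμ1] using congrArg norm (hμ 0)
  simp only [hconst, Finset.sum_const, Finset.card_univ, ZMod.card, nsmul_eq_mul] at hφnorm
  rw [hconst]
  exact eq_one_div_sqrt_of_mul_sq_eq_one (norm_nonneg _) hφnorm

theorem hasQuadraticPhase_of_slope : HasQuadraticPhase (-c) φ := fun u s => by
  obtain ⟨μ, -, hμ⟩ := exists_eigenvalue_of_slope hφnorm hφ u
  have hu : φ u = μ * φ 0 := by simpa using hμ 0
  have he : 𝕖 (-c * u * s) * 𝕖 (u * c * s) = 1 := by
    rw [← AddChar.map_add_eq_mul]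
    ring_nf
    exact AddChar.map_zero_eq_one _
  rw [add_comm u s, hu]
  linear_combination (-(φ 0) * φ (s + u)) * he + (𝕖 (-c * u * s) * φ 0) * hμ s

end Eigenvectors

theorem norm_sum_mul_conj_of_slope_ne [Fact p.Prime] {φ ψ : ZMod p → ℂ} {c d : ZMod p}
    (hcd : c ≠ d) (hφnorm : ∑ t, ‖φ t‖ ^ 2 = 1) (hψnorm : ∑ t, ‖ψ t‖ ^ 2 = 1)
    (hφ : ∀ v ∈ ZMod p ∙ ((1, c) : ZMod p × ZMod p), ∃ μ : ℂ, heisU p v φ = μ • φ)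
    (hψ : ∀ v ∈ ZMod p ∙ ((1, d) : ZMod p × ZMod p), ∃ μ : ℂ, heisU p v ψ = μ • ψ) :
    ‖∑ t, φ t * conj (ψ t)‖ = 1 / Real.sqrt p := by
  have hp : (0 : ℝ) < p := Nat.cast_pos.mpr (NeZero.pos p)
  have hr (t : ZMod p) : ‖φ t * conj (ψ t)‖ = 1 / p := by
    rw [norm_mul, Complex.norm_conj, norm_apply_of_slope hφnorm hφ,
      norm_apply_of_slope hψnorm hψ, div_mul_div_comm, one_mul, Real.mul_self_sqrt hp.le]
  have h0 : φ 0 * conj (ψ 0) ≠ 0 := by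
    rw [← norm_ne_zero_iff, hr]
    positivity
  have hsum := ((hasQuadraticPhase_of_slope hφnorm hφ).mul_conj
    (hasQuadraticPhase_of_slope hψnorm hψ)).norm_sum_sq
    (by rwa [neg_sub_neg, sub_ne_zero, ne_comm]) h0 hr
  refine eq_one_div_sqrt_of_mul_sq_eq_one (norm_nonneg _) ?_
  rw [hsum]
  field_simp

end

theorem stmt_13_general (p : ℕ) [Fact p.Prime]
    (L M : Submodule (ZMod p) (ZMod p × ZMod p))
    (hL : Module.finrank (ZMod p) L = 1) (hM : Module.finrank (ZMod p) M = 1)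
    (hLM : L ≠ M)
    (φ ψ : ZMod p → ℂ)
    (hφnorm : ∑ t, ‖φ t‖ ^ 2 = 1)
    (hψnorm : ∑ t, ‖ψ t‖ ^ 2 = 1)
    (hφ : ∀ v ∈ L, ∃ c : ℂ, heisU p v φ = c • φ)
    (hψ : ∀ v ∈ M, ∃ c : ℂ, heisU p v ψ = c • ψ) :
    ‖∑ t, φ t * (starRingEnd ℂ) (ψ t)‖ = 1 / Real.sqrt p := by
  rcases Submodule.eq_span_vertical_or_slope hL with rfl | ⟨c, rfl⟩ <;>
    rcases Submodule.eq_span_vertical_or_slope hM with rfl | ⟨d, rfl⟩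
  · exact absurd rfl hLM
  · obtain ⟨t₀, hφt₀, hφ0⟩ := exists_single_of_vertical hφnorm hφ
    rw [Finset.sum_eq_single t₀ (fun t _ ht => by simp [hφ0 t ht]) (by simp), norm_mul,
      Complex.norm_conj, hφt₀, norm_apply_of_slope hψnorm hψ, one_mul]
  · obtain ⟨t₀, hψt₀, hψ0⟩ := exists_single_of_vertical hψnorm hψ
    rw [Finset.sum_eq_single t₀ (fun t _ ht => by simp [hψ0 t ht]) (by simp), norm_mul,
      Complex.norm_conj, hψt₀, norm_apply_of_slope hφnorm hφ, mul_one]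
  · exact norm_sum_mul_conj_of_slope_ne (by rintro rfl; exact hLM rfl) hφnorm hψnorm hφ hψ

/-- Mutual unbiasedness of the eigenbases of the Heisenberg representation attached to two
distinct lines `L ≠ M` in the symplectic plane `𝔽_p × 𝔽_p` (`p` an odd prime): if `φ` is a
unit joint eigenvector of the operators `π(l)`, `l ∈ L`, and `ψ` is a unit joint eigenvector
of the operators `π(m)`, `m ∈ M`, then `|⟨φ, ψ⟩| = 1/√p`. -/
theorem stmt_13 (p : ℕ) [Fact p.Prime] (hodd : p ≠ 2)
    (L M : Submodule (ZMod p) (ZMod p × ZMod p))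
    (hL : Module.finrank (ZMod p) L = 1) (hM : Module.finrank (ZMod p) M = 1)
    (hLM : L ≠ M)
    (φ ψ : ZMod p → ℂ)
    (hφnorm : ∑ t, ‖φ t‖ ^ 2 = 1)
    (hψnorm : ∑ t, ‖ψ t‖ ^ 2 = 1)
    (hφ : ∀ v ∈ L, ∃ c : ℂ, heisU p v φ = c • φ)
    (hψ : ∀ v ∈ M, ∃ c : ℂ, heisU p v ψ = c • ψ) :
    ‖∑ t, φ t * (starRingEnd ℂ) (ψ t)‖ = 1 / Real.sqrt p :=
  stmt_13_general p L M hL hM hLM φ ψ hφnorm hψnorm hφ hψ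
end

section
/- Let γ be a closed strict path of length k on a finite set with k ≤ 2(|V_γ| − 1), where V_γ is its vertex set. Then there exists an index i₀ with 0 ≤ i₀ ≤ k−1 such that the vertex γ(i₀) is crossed exactly once by γ. -/
/-- Let `γ` be a closed strict path of positive length `k` on a set `A` with
`k ≤ 2(|V_γ| − 1)`. Then some vertex is crossed exactly once by `γ`, i.e. there is an index
`i₀ ∈ {0,...,k−1}` such that `γ(j) = γ(i₀)` for `j ∈ {0,...,k−1}` only for `j = i₀`. -/
theorem stmt_18 {A : Type*} (k : ℕ) (hk : 0 < k) (γ : Fin (k + 1) → A)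
    (hclosed : γ 0 = γ (Fin.last k))
    (hstrict : ∀ j : Fin k, γ j.castSucc ≠ γ j.succ)
    (hfin : (Set.range γ).Finite)
    (hcard : k ≤ 2 * ((Set.range γ).ncard - 1)) :
    ∃ i₀ : Fin k, ∀ j : Fin k, γ j.castSucc = γ i₀.castSucc → j = i₀ := by
  classical
  set f : Fin k → A := fun j => γ j.castSucc with hf
  have hrange : Set.range γ = Set.range f := by
    ext a
    constructor
    · rintro ⟨j, rfl⟩
      by_cases h : (j : ℕ) < k
      · exact ⟨⟨j, h⟩, rfl⟩
      · have : j = Fin.last k := by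
          have hj := j.isLt
          ext
          simp only [Fin.val_last]
          omega
        refine ⟨⟨0, hk⟩, ?_⟩
        simp only [hf]
        rw [this, ← hclosed]
        congr 1
    · rintro ⟨j, rfl⟩
      exact ⟨j.castSucc, rfl⟩
  by_contra hcon
  push_neg at hcon
  -- every fiber of f has at least 2 elements
  set s : Finset A := Finset.univ.image f with hs
  have hncard : (Set.range γ).ncard = s.card := by
    rw [hrange, ← Set.ncard_coe_finset s, hs]
    congr 1
    simp
  have hsum : (Finset.univ : Finset (Fin k)).card =
      ∑ a ∈ s, (Finset.univ.filter (fun j => f j = a)).card := by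
    apply Finset.card_eq_sum_card_fiberwise
    intro x _
    exact Finset.mem_image_of_mem f (Finset.mem_univ x)
  have hfib : ∀ a ∈ s, 2 ≤ (Finset.univ.filter (fun j => f j = a)).card := by
    intro a ha
    obtain ⟨i, _, hi⟩ := Finset.mem_image.mp ha
    obtain ⟨j, hji, hjne⟩ := hcon i
    refine Finset.one_lt_card.mpr ⟨j, ?_, i, ?_, hjne⟩ <;>
        simp only [Finset.mem_filter, Finset.mem_univ, true_and, hf]
    · exact hji.trans hi
    · exact hi
  have h2 : 2 * s.card ≤ k := by
    calc 2 * s.card = ∑ _a ∈ s, 2 := by rw [Finset.sum_const]; ring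
    _ ≤ ∑ a ∈ s, (Finset.univ.filter (fun j => f j = a)).card :=
        Finset.sum_le_sum hfib
    _ = k := by rw [← hsum, Finset.card_univ, Fintype.card_fin]
  have hpos : 0 < s.card := by
    rw [hs, Finset.card_pos]
    exact ⟨f ⟨0, hk⟩, Finset.mem_image_of_mem f (Finset.mem_univ _)⟩
  rw [hncard] at hcard
  omega
end
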